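/- Let X be a real n×p matrix, y ∈ ℝⁿ, λ₂ > 0, and k a positive integer. Suppose m_{2k} > 0 is a restricted strong convexity parameter of L_ridge with support size 2k. Let β ∈ ℝᵖ with ‖β‖₀ ≤ k and ∇_j L_ridge(β) = 0 for every j ∈ supp(β), and let β* ∈ ℝᵖ with ‖β*‖₀ ≤ k. Then Σ_{j ∈ supp(β*) \ supp(β)} (∇_j L_ridge(β))² ≥ 2 m_{2k} (L_ridge(β) − L_ridge(β*)). -/
import Mathlib


open Matrix

noncomputable section

/-- The ridge loss `L_ridge(β) = βᵀXᵀXβ − 2yᵀXβ + λ₂‖β‖₂²`. -/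
def Lridge {n p : ℕ} (X : Matrix (Fin n) (Fin p) ℝ) (y : Fin n → ℝ) (lam2 : ℝ)
    (β : Fin p → ℝ) : ℝ :=
  β ⬝ᵥ (Xᵀ * X).mulVec β - 2 * (y ⬝ᵥ X.mulVec β) + lam2 * ∑ j, (β j) ^ 2

/-- The gradient `∇L_ridge(β) = 2Xᵀ(Xβ − y) + 2λ₂β`. -/
def gradLridge {n p : ℕ} (X : Matrix (Fin n) (Fin p) ℝ) (y : Fin n → ℝ) (lam2 : ℝ)
    (β : Fin p → ℝ) : Fin p → ℝ :=
  (2 : ℝ) • Xᵀ.mulVec (X.mulVec β - y) + (2 * lam2) • β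

/-- Restricted strong convexity bounds the suboptimality gap by the squared gradient entries on
`supp(β*) \ supp(β)`. -/
theorem stmt14 {n p : ℕ} (X : Matrix (Fin n) (Fin p) ℝ) (y : Fin n → ℝ)
    (lam2 : ℝ) (hlam2 : 0 < lam2) (k : ℕ) (hk : 0 < k)
    (m2k : ℝ) (hm2k : 0 < m2k)
    (hrsc : ∀ u v : Fin p → ℝ,
      (Function.support u).ncard ≤ 2 * k → (Function.support v).ncard ≤ 2 * k →
      (Function.support (u - v)).ncard ≤ 2 * k →
      Lridge X y lam2 u + gradLridge X y lam2 u ⬝ᵥ (v - u)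
          + m2k / 2 * ∑ j, (v j - u j) ^ 2
        ≤ Lridge X y lam2 v)
    (β βstar : Fin p → ℝ)
    (hβ : (Function.support β).ncard ≤ k)
    (hstat : ∀ j, β j ≠ 0 → gradLridge X y lam2 β j = 0)
    (hβstar : (Function.support βstar).ncard ≤ k) :
    2 * m2k * (Lridge X y lam2 β - Lridge X y lam2 βstar)
      ≤ ∑ j, (Function.support βstar \ Function.support β).indicator
          (fun i => (gradLridge X y lam2 β i) ^ 2) j := by
  set g := gradLridge X y lam2 β with hg
  have hsupp : (Function.support (β - βstar)).ncard ≤ 2 * k := by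
    calc (Function.support (β - βstar)).ncard
        ≤ (Function.support β ∪ Function.support βstar).ncard :=
          Set.ncard_le_ncard (Function.support_sub _ _) (Set.toFinite _)
      _ ≤ (Function.support β).ncard + (Function.support βstar).ncard :=
          Set.ncard_union_le _ _
      _ ≤ 2 * k := by omega
  have hr := hrsc β βstar (hβ.trans (by omega)) (hβstar.trans (by omega)) hsupp
  have hdot : g ⬝ᵥ (βstar - β) = ∑ j, g j * (βstar j - β j) := by
    simp [dotProduct]
  rw [hdot] at hr
  have key : ∀ j ∈ Finset.univ,
      -(2*m2k) * (g j * (βstar j - β j)) - m2k^2 * (βstar j - β j)^2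
      ≤ (Function.support βstar \ Function.support β).indicator (fun i => (g i)^2) j := by
    intro j _
    by_cases hj : j ∈ Function.support βstar \ Function.support β
    · rw [Set.indicator_of_mem hj]
      nlinarith [sq_nonneg (g j + m2k * (βstar j - β j))]
    · rw [Set.indicator_of_notMem hj]
      by_cases hb : β j = 0
      · have hbs : βstar j = 0 := by
          by_contra h
          exact hj ⟨h, by simpa [Function.mem_support] using hb⟩
        simp [hb, hbs]
      · have hgz : g j = 0 := hstat j hb
        rw [hgz]
        nlinarith [sq_nonneg (βstar j - β j)]
  have hsum := Finset.sum_le_sum key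
  have hexp : ∑ j, (-(2*m2k) * (g j * (βstar j - β j)) - m2k^2 * (βstar j - β j)^2)
      = -(2*m2k) * (∑ j, g j * (βstar j - β j)) - m2k^2 * ∑ j, (βstar j - β j)^2 := by
    rw [Finset.sum_sub_distrib, ← Finset.mul_sum, ← Finset.mul_sum]
  calc 2 * m2k * (Lridge X y lam2 β - Lridge X y lam2 βstar)
      ≤ ∑ j, (-(2*m2k) * (g j * (βstar j - β j)) - m2k^2 * (βstar j - β j)^2) := by
        rw [hexp]
        nlinarith [hr, hm2k]
    _ ≤ _ := hsum
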